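/- arXiv:1602.02439 — 2 statements merged into one kernel-verified Lean document; each statement's English description precedes it below -/
import Mathlib

section
/- Suppose workers i and m satisfy F(m)·e(m) > F(i)·e(i), F(m) ≥ F(i), C(i) ≥ C(m), e(m) ≥ e(i), and all outputs are bounded by W with α ≤ 1/(2W). Then for any average effort ē with 0 ≤ ē ≤ e(i), the client's long-run profit from worker i, [F(i)·ē − α·F(i)²·ē²]·L(i), is at most the profit from worker m exerting maximal effort, [F(m)·e(m) − α·F(m)²·e(m)²]·L(m), where L(k) = 1 if α·F(k)²·g − C(k) ≥ 0 and L(k) = 0 otherwise, for a fixed task quality g > 0. -/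
/-- The profit function `w ↦ w - α w²` is monotone on `[0, W]` when `2αW ≤ 1`. -/
lemma profit_mono (α W x y : ℝ) (hα : 0 < α) (hx0 : 0 ≤ x) (hxy : x ≤ y)
    (hyW : y ≤ W) (hαW2 : α * (2 * W) ≤ 1) :
    x - α * x ^ 2 ≤ y - α * y ^ 2 := by
  have hαx : α * x ≤ α * y := mul_le_mul_of_nonneg_left hxy hα.le
  have hαy : α * y ≤ α * W := mul_le_mul_of_nonneg_left hyW hα.le
  have h1 : 0 ≤ 1 - α * (x + y) := by nlinarith
  nlinarith [mul_nonneg (sub_nonneg.mpr hxy) h1]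

/-- Key inequality of the long-run stability proof: if worker `m` has a strictly larger
maximum output than worker `i` (`Fm·em > Fi·ei`), is weakly more productive, has weakly lower
cost and weakly larger maximum effort, outputs are bounded by `W` and `α ≤ 1/(2W)`, then the
client's long-run profit from worker `i` at any average effort `ē ∈ [0, ei]` is at most the
profit from worker `m` exerting maximal effort, where the indicator `L(k)` records whether
worker `k` is willing to exert effort. -/
theorem stability_key_inequality (α W g Fi Fm ei em Ci Cm ebar : ℝ)
    (hW : 0 < W) (hα : 0 < α) (hαW : α ≤ 1 / (2 * W)) (hg : 0 < g)
    (hFi : 0 < Fi) (hFm : 0 < Fm) (hei : 0 < ei) (hem : 0 < em)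
    (hCi : 0 ≤ Ci) (hCm : 0 ≤ Cm)
    (hout : Fi * ei < Fm * em) (hF : Fi ≤ Fm) (hC : Cm ≤ Ci) (he : ei ≤ em)
    (hWm : Fm * em ≤ W)
    (hebar0 : 0 ≤ ebar) (hebar : ebar ≤ ei) :
    (Fi * ebar - α * Fi ^ 2 * ebar ^ 2) *
        (if 0 ≤ α * Fi ^ 2 * g - Ci then (1 : ℝ) else 0) ≤
      (Fm * em - α * Fm ^ 2 * em ^ 2) *
        (if 0 ≤ α * Fm ^ 2 * g - Cm then (1 : ℝ) else 0) := by
  have hx0 : 0 ≤ Fi * ebar := mul_nonneg hFi.le hebar0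
  have hxy : Fi * ebar ≤ Fm * em := by nlinarith
  have hαW2 : α * (2 * W) ≤ 1 := by
    have h2W : 0 < 2 * W := by linarith
    calc α * (2 * W) ≤ (1 / (2 * W)) * (2 * W) := by nlinarith
      _ = 1 := by field_simp
  have hmono := profit_mono α W (Fi * ebar) (Fm * em) hα hx0 hxy hWm hαW2
  have hixi : α * Fi ^ 2 * ebar ^ 2 = α * (Fi * ebar) ^ 2 := by ring
  have hmym : α * Fm ^ 2 * em ^ 2 = α * (Fm * em) ^ 2 := by ring
  have hym : 0 ≤ Fm * em - α * Fm ^ 2 * em ^ 2 := by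
    have := profit_mono α W 0 (Fm * em) hα le_rfl (mul_nonneg hFm.le hem.le) hWm hαW2
    rw [hmym]; nlinarith
  by_cases hli : 0 ≤ α * Fi ^ 2 * g - Ci
  · have hFsq : Fi ^ 2 ≤ Fm ^ 2 := by nlinarith
    have hlm : 0 ≤ α * Fm ^ 2 * g - Cm := by
      nlinarith [mul_le_mul_of_nonneg_left hFsq (mul_nonneg hα.le hg.le)]
    rw [if_pos hli, if_pos hlm, mul_one, mul_one, hixi, hmym]
    linarith
  · rw [if_neg hli, mul_zero]
    split
    · simpa using hym
    · simp
end

section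
/- In the two-worker, two-task example with productivities F(1,1)=6, F(1,2)=2, F(2,1)=5, F(2,2)=4, all maximum efforts equal to 1, and task qualities g(1)=2 > g(2)=1, the matching produced by ranking workers by their uniform-average output (worker 1: (6+2)/2 = 4 < worker 2: (5+4)/2 = 4.5, so worker 2 gets task 1, worker 1 gets task 2) is not stable: worker 1 and task 1 form a blocking pair, since worker 1's output 6 on task 1 exceeds worker 2's output 5, and worker 1 prefers task 1 (which pays more per unit output) to task 2. The assortative matching by per-task output (worker 1 ↔ task 1, worker 2 ↔ task 2) is stable. -/
/-- Outputs (productivity × unit effort) of the two workers on the two tasks: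
worker 1 (index 0): 6 on task 1, 2 on task 2; worker 2 (index 1): 5 on task 1, 4 on task 2. -/
def exOutput : Fin 2 → Fin 2 → ℝ := ![![6, 2], ![5, 4]]

/-- Task qualities: task 1 (index 0) has quality 2, task 2 (index 1) has quality 1;
each worker strictly prefers the higher-quality (better-paying) task. -/
def exQuality : Fin 2 → ℝ := ![2, 1]

/-- Worker `i` strictly prefers task `x` to task `y` (task 1 pays strictly more per unit
output, so preference is by quality). -/
def exWorkerPrefers (x y : Fin 2) : Prop := exQuality y < exQuality x

/-- Client `j` strictly prefers worker `i` to worker `k` iff `i`'s output on task `j` is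
strictly larger. -/
def exClientPrefers (j i k : Fin 2) : Prop := exOutput k j < exOutput i j

/-- A matching (worker → task) is stable if there is no worker–task pair, not matched to
each other, that mutually strictly prefer each other. -/
def exStable (μ : Equiv.Perm (Fin 2)) : Prop :=
  ¬ ∃ (i j : Fin 2), μ i ≠ j ∧ exWorkerPrefers j (μ i) ∧ exClientPrefers j i (μ.symm j)

/-- In the two-worker, two-task example, the matching produced by ranking workers by their
uniform-average output (worker 1 gets task 2, worker 2 gets task 1, i.e. the swap) is not
stable — worker 1 and task 1 form a blocking pair — while the assortative matching by
per-task output (the identity) is stable. -/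
theorem average_output_matching_unstable :
    ((0 : Fin 2) ≠ (1 : Fin 2)) ∧
    (exOutput 0 0 + exOutput 0 1) / 2 < (exOutput 1 0 + exOutput 1 1) / 2 ∧
    ¬ exStable (Equiv.swap (0 : Fin 2) 1) ∧
    exStable (Equiv.refl (Fin 2)) := by
  refine ⟨by decide, by norm_num [exOutput], ?_, ?_⟩
  · intro h
    exact h ⟨0, 0, by decide, by norm_num [exWorkerPrefers, exQuality],
      by norm_num [exClientPrefers, exOutput]⟩
  · rintro ⟨i, j, hne, hw, hc⟩
    fin_cases i <;> fin_cases j <;>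
      simp_all [exWorkerPrefers, exClientPrefers, exQuality, exOutput] <;> linarith
end
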